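/- arXiv:1512.03324 — 2 statements merged into one kernel-verified Lean document; each statement's English description precedes it below -/
import Mathlib

section
/- Let p be a finitely supported joint probability mass function of discrete random variables X_1,…,X_N and let A, B ⊆ {1,…,N}. Let q1 be the probability mass function p_{X_{A∪B}} ⊗ p_{X_{(A∪B)^c}} (product of the marginal on A∪B and the marginal on its complement), and let q2 be the probability mass function given by q2(x) = p_{X_{A∖B}|X_{A∩B}}(x_{A∖B} | x_{A∩B}) · p_{X_B}(x_B) · p_{X_{(A∪B)^c}}(x_{(A∪B)^c}). Then D(q1 ‖ q2) = H(X_A) + H(X_B) − H(X_{A∩B}) − H(X_{A∪B}). In particular, the submodularity inequality H(X_A) + H(X_B) ≥ H(X_{A∩B}) + H(X_{A∪B}) is equivalent to the nonnegativity of this Kullback–Leibler divergence. -/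
open Finset

variable {N : ℕ} {X : Fin N → Type} [∀ i, Fintype (X i)] [∀ i, DecidableEq (X i)]

/-- Restriction of an outcome `x` to the coordinates in `A`. -/
def restr (A : Finset (Fin N)) (x : ∀ i, X i) : ∀ i : {j // j ∈ A}, X i.1 :=
  fun i => x i.1

/-- Marginal of the joint pmf `p` on the coordinates in `A`. -/
noncomputable def marg (p : (∀ i, X i) → ℝ) (A : Finset (Fin N)) :
    (∀ i : {j // j ∈ A}, X i.1) → ℝ :=
  fun y => ∑ x ∈ Finset.univ.filter (fun x : ∀ i, X i => restr A x = y), p x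

/-- Shannon entropy in bits of the marginal of `p` on the coordinates in `A`. -/
noncomputable def entH (p : (∀ i, X i) → ℝ) (A : Finset (Fin N)) : ℝ :=
  -∑ y : ∀ i : {j // j ∈ A}, X i.1, marg p A y * Real.logb 2 (marg p A y)

/-- Kullback–Leibler divergence in bits between pmfs on a finite set. -/
noncomputable def KL {α : Type*} [Fintype α] (p q : α → ℝ) : ℝ :=
  ∑ a, p a * Real.logb 2 (p a / q a)

lemma marg_sum_mul (p : (∀ i, X i) → ℝ) (A : Finset (Fin N))
    (f : (∀ i : {j // j ∈ A}, X i.1) → ℝ) :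
    ∑ y, marg p A y * f y = ∑ x, p x * f (restr A x) := by
  rw [← Finset.sum_fiberwise Finset.univ (restr A) (fun x => p x * f (restr A x))]
  refine Finset.sum_congr rfl fun y _ => ?_
  rw [marg, Finset.sum_mul]
  refine Finset.sum_congr rfl fun x hx => ?_
  simp only [Finset.mem_filter] at hx
  rw [hx.2]

lemma marg_nonneg (p : (∀ i, X i) → ℝ) (hp : ∀ x, 0 ≤ p x) (A : Finset (Fin N)) (y) :
    0 ≤ marg p A y :=
  Finset.sum_nonneg fun x _ => hp x

lemma marg_sum_one (p : (∀ i, X i) → ℝ) (hsum : ∑ x, p x = 1) (A : Finset (Fin N)) :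
    ∑ y, marg p A y = 1 := by
  have := marg_sum_mul p A (fun _ => 1)
  simpa [hsum] using this

lemma marg_mono (p : (∀ i, X i) → ℝ) (hp : ∀ x, 0 ≤ p x) {D C : Finset (Fin N)}
    (h : D ⊆ C) (x : ∀ i, X i) :
    marg p C (restr C x) ≤ marg p D (restr D x) := by
  apply Finset.sum_le_sum_of_subset_of_nonneg
  · intro x' hx'
    simp only [Finset.mem_filter] at *
    refine ⟨hx'.1, funext fun i => ?_⟩
    exact congrFun hx'.2 ⟨i.1, h i.2⟩
  · intro x' _ _; exact hp x'

def combine (C : Finset (Fin N))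
    (yz : (∀ i : {j // j ∈ C}, X i.1) × (∀ i : {j // j ∈ Cᶜ}, X i.1)) : ∀ i, X i :=
  fun i => if h : i ∈ C then yz.1 ⟨i, h⟩ else yz.2 ⟨i, Finset.mem_compl.mpr h⟩

def splitEquiv (C : Finset (Fin N)) :
    (∀ i, X i) ≃ (∀ i : {j // j ∈ C}, X i.1) × (∀ i : {j // j ∈ Cᶜ}, X i.1) where
  toFun x := (restr C x, restr Cᶜ x)
  invFun := combine C
  left_inv x := by
    funext i
    unfold combine restr
    by_cases h : i ∈ C <;> simp [h]
  right_inv yz := by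
    refine Prod.ext ?_ ?_ <;> funext i
    · show combine C yz i.1 = _
      unfold combine
      simp [i.2]
    · show combine C yz i.1 = _
      have : i.1 ∉ C := Finset.mem_compl.mp i.2
      unfold combine
      simp [this]

lemma prod_sum (p : (∀ i, X i) → ℝ) (hsum : ∑ x, p x = 1) (C : Finset (Fin N))
    (g : (∀ i : {j // j ∈ C}, X i.1) → ℝ) :
    ∑ x, marg p C (restr C x) * marg p Cᶜ (restr Cᶜ x) * g (restr C x)
      = ∑ y, marg p C y * g y := by
  rw [Fintype.sum_equiv (splitEquiv (X := X) C)
    (fun x => marg p C (restr C x) * marg p Cᶜ (restr Cᶜ x) * g (restr C x))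
    (fun yz => marg p C yz.1 * marg p Cᶜ yz.2 * g yz.1) (fun x => rfl)]
  rw [Fintype.sum_prod_type]
  refine Finset.sum_congr rfl fun y _ => ?_
  have : ∑ z, marg p C y * marg p Cᶜ z * g y
      = (marg p C y * g y) * ∑ z, marg p Cᶜ z := by
    rw [Finset.mul_sum]; refine Finset.sum_congr rfl fun z _ => by ring
  rw [this, marg_sum_one p hsum, mul_one]

def restr2 {D C : Finset (Fin N)} (h : D ⊆ C) (y : ∀ i : {j // j ∈ C}, X i.1) :
    ∀ i : {j // j ∈ D}, X i.1 := fun i => y ⟨i.1, h i.2⟩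

example (D C : Finset (Fin N)) (h : D ⊆ C) (x : ∀ i, X i) :
    restr2 h (restr C x) = restr D x := rfl

lemma sum_logb (p : (∀ i, X i) → ℝ) (hsum : ∑ x, p x = 1) {D C : Finset (Fin N)}
    (h : D ⊆ C) :
    ∑ x, marg p C (restr C x) * marg p Cᶜ (restr Cᶜ x)
        * Real.logb 2 (marg p D (restr D x)) = -entH p D := by
  have h1 := prod_sum p hsum C (fun y => Real.logb 2 (marg p D (restr2 h y)))
  have h2 := marg_sum_mul p C (fun y => Real.logb 2 (marg p D (restr2 h y)))
  have h3 := marg_sum_mul p D (fun w => Real.logb 2 (marg p D w))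
  rw [entH, neg_neg, h3]
  exact h1.trans h2


set_option maxHeartbeats 1000000 in
/-- `D(q1 ‖ q2) = H(X_A) + H(X_B) − H(X_{A∩B}) − H(X_{A∪B})` where
`q1 = p_{A∪B} ⊗ p_{(A∪B)ᶜ}` and `q2 = p_{A∖B|A∩B} · p_B · p_{(A∪B)ᶜ}`; in particular
submodularity of entropy is equivalent to nonnegativity of this divergence. -/
theorem stmt2 (p : (∀ i, X i) → ℝ) (hp : ∀ x, 0 ≤ p x) (hsum : ∑ x, p x = 1)
    (A B : Finset (Fin N)) :
    KL (fun x => marg p (A ∪ B) (restr (A ∪ B) x) * marg p (A ∪ B)ᶜ (restr (A ∪ B)ᶜ x))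
        (fun x => marg p A (restr A x) / marg p (A ∩ B) (restr (A ∩ B) x) *
          marg p B (restr B x) * marg p (A ∪ B)ᶜ (restr (A ∪ B)ᶜ x)) =
      entH p A + entH p B - entH p (A ∩ B) - entH p (A ∪ B) ∧
    (0 ≤ KL (fun x => marg p (A ∪ B) (restr (A ∪ B) x) * marg p (A ∪ B)ᶜ (restr (A ∪ B)ᶜ x))
        (fun x => marg p A (restr A x) / marg p (A ∩ B) (restr (A ∩ B) x) *
          marg p B (restr B x) * marg p (A ∪ B)ᶜ (restr (A ∪ B)ᶜ x)) ↔
      entH p (A ∩ B) + entH p (A ∪ B) ≤ entH p A + entH p B) := by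
  have hAC : A ⊆ A ∪ B := Finset.subset_union_left
  have hBC : B ⊆ A ∪ B := Finset.subset_union_right
  have hIC : A ∩ B ⊆ A ∪ B := Finset.inter_subset_left.trans hAC
  have key : KL (fun x => marg p (A ∪ B) (restr (A ∪ B) x) * marg p (A ∪ B)ᶜ (restr (A ∪ B)ᶜ x))
        (fun x => marg p A (restr A x) / marg p (A ∩ B) (restr (A ∩ B) x) *
          marg p B (restr B x) * marg p (A ∪ B)ᶜ (restr (A ∪ B)ᶜ x)) =
      entH p A + entH p B - entH p (A ∩ B) - entH p (A ∪ B) := by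
    rw [KL]
    have hpt : ∀ x : ∀ i, X i,
        marg p (A ∪ B) (restr (A ∪ B) x) * marg p (A ∪ B)ᶜ (restr (A ∪ B)ᶜ x) *
          Real.logb 2 ((marg p (A ∪ B) (restr (A ∪ B) x) * marg p (A ∪ B)ᶜ (restr (A ∪ B)ᶜ x)) /
            (marg p A (restr A x) / marg p (A ∩ B) (restr (A ∩ B) x) *
              marg p B (restr B x) * marg p (A ∪ B)ᶜ (restr (A ∪ B)ᶜ x)))
        = marg p (A ∪ B) (restr (A ∪ B) x) * marg p (A ∪ B)ᶜ (restr (A ∪ B)ᶜ x) *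
            Real.logb 2 (marg p (A ∪ B) (restr (A ∪ B) x))
          + marg p (A ∪ B) (restr (A ∪ B) x) * marg p (A ∪ B)ᶜ (restr (A ∪ B)ᶜ x) *
            Real.logb 2 (marg p (A ∩ B) (restr (A ∩ B) x))
          - marg p (A ∪ B) (restr (A ∪ B) x) * marg p (A ∪ B)ᶜ (restr (A ∪ B)ᶜ x) *
            Real.logb 2 (marg p A (restr A x))
          - marg p (A ∪ B) (restr (A ∪ B) x) * marg p (A ∪ B)ᶜ (restr (A ∪ B)ᶜ x) *
            Real.logb 2 (marg p B (restr B x)) := by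
      intro x
      set a := marg p (A ∪ B) (restr (A ∪ B) x) with ha'
      set b := marg p (A ∪ B)ᶜ (restr (A ∪ B)ᶜ x) with hb'
      set α := marg p A (restr A x) with hα'
      set β := marg p B (restr B x) with hβ'
      set γ := marg p (A ∩ B) (restr (A ∩ B) x) with hγ'
      by_cases h0 : a * b = 0
      · rw [h0]; ring
      · have ha : 0 < a := lt_of_le_of_ne (marg_nonneg p hp _ _) (Ne.symm (mul_ne_zero_iff.mp h0).1)
        have hb : 0 < b := lt_of_le_of_ne (marg_nonneg p hp _ _) (Ne.symm (mul_ne_zero_iff.mp h0).2)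
        have hα : 0 < α := lt_of_lt_of_le ha (marg_mono p hp hAC x)
        have hβ : 0 < β := lt_of_lt_of_le ha (marg_mono p hp hBC x)
        have hγ : 0 < γ := lt_of_lt_of_le ha (marg_mono p hp hIC x)
        have hratio : a * b / (α / γ * β * b) = a * γ / (α * β) := by
          field_simp
        rw [hratio, Real.logb_div (mul_pos ha hγ).ne' (mul_pos hα hβ).ne',
          Real.logb_mul ha.ne' hγ.ne', Real.logb_mul hα.ne' hβ.ne']
        ring
    rw [Finset.sum_congr rfl (fun x _ => hpt x)]
    have hsplit : ∀ f g h k : (∀ i, X i) → ℝ,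
        ∑ x, (f x + g x - h x - k x) = ∑ x, f x + ∑ x, g x - ∑ x, h x - ∑ x, k x := by
      intro f g h k
      simp [Finset.sum_add_distrib, Finset.sum_sub_distrib]
    rw [hsplit, sum_logb p hsum (le_refl (A ∪ B)), sum_logb p hsum hIC,
      sum_logb p hsum hAC, sum_logb p hsum hBC]
    ring
  exact ⟨key, by rw [key]; constructor <;> intro h <;> linarith⟩
end

section
/- The function φ(α) = −α·log2(α) − (1−α)·log2(1−α) − (1+2α)/2 has exactly one zero in the open interval (0, 1/2). That is, the equation −α·log2(α) − (1−α)·log2(1−α) = (1+2α)/2 has a unique solution α_0 with 0 < α_0 < 1/2. -/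
/-!
Measured in nats, the equation reads `binEntropy α = log 2 * (1 + 2α) / 2`, i.e. `phi α = 0` for
`phi := binEntropy - (affine)`, a strictly concave function on `[0, 1]`. Since
`phi 0 < 0 < phi (1/3)`, the intermediate value theorem gives a zero in `(0, 1/3)`. Since also
`phi (1/2) = 0`, strict concavity leaves room for at most one zero to the left of `1/2`: a zero
strictly between another zero and `1/2` would lie strictly above the chord joining them.
-/

open Real Set

theorem StrictConcaveOn.eq_of_map_eq_of_lt {f : ℝ → ℝ} {s : Set ℝ} {x y c : ℝ}
    (hf : StrictConcaveOn ℝ s f) (hx : x ∈ s) (hy : y ∈ s) (hc : c ∈ s) (hxc : x < c)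
    (hyc : y < c) (hfx : f x = f c) (hfy : f y = f c) : x = y := by
  have lt_of_between : ∀ {u v}, u ∈ s → u < v → v < c → f u = f c → f c < f v := fun hu huv hvc hfu => by
    simpa [hfu] using hf.lt_on_openSegment hu hc (huv.trans hvc).ne
      (by rw [openSegment_eq_Ioo (huv.trans hvc)]; exact ⟨huv, hvc⟩)
  rcases lt_trichotomy x y with hxy | rfl | hyx
  · exact absurd hfy (lt_of_between hx hxy hyc hfx).ne'
  · rfl
  · exact absurd hfx (lt_of_between hy hyx hxc hfy).ne'

-- `log 2` times the paper's `φ`.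
noncomputable def phi (α : ℝ) : ℝ := binEntropy α - log 2 * ((1 + 2 * α) / 2)

lemma strictConcaveOn_phi : StrictConcaveOn ℝ (Icc 0 1) phi :=
  strictConcave_binEntropy.sub_convexOn
    ⟨convex_Icc 0 1, fun x _ y _ a b _ _ hab => by
      simp only [smul_eq_mul]; linear_combination (-log 2 / 2) * hab⟩

lemma continuous_phi : Continuous phi := by unfold phi; fun_prop

lemma phi_two_inv : phi 2⁻¹ = 0 := by rw [phi, binEntropy_two_inv]; ring

lemma phi_zero_neg : phi 0 < 0 := by norm_num [phi]; positivity

lemma phi_one_third_pos : 0 < phi (1 / 3) := by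
  have h : 3 * log 2 < 2 * log 3 := by
    have h89 := log_lt_log (by norm_num) (show (2 : ℝ) ^ 3 < 3 ^ 2 by norm_num)
    rwa [log_pow, log_pow, Nat.cast_ofNat, Nat.cast_ofNat] at h89
  have h3 : log (1 / 3)⁻¹ = log 3 := by norm_num
  have h32 : log (1 - 1 / 3 : ℝ)⁻¹ = log 3 - log 2 := by
    rw [show (1 - 1 / 3 : ℝ)⁻¹ = 3 / 2 by norm_num, log_div (by norm_num) (by norm_num)]
  rw [phi, binEntropy, h3, h32]
  linarith

lemma binEntropy_div_log_two (α : ℝ) :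
    -α * logb 2 α - (1 - α) * logb 2 (1 - α) = binEntropy α / log 2 := by
  rw [binEntropy, log_inv, log_inv, logb, logb]; ring

lemma exists_mem_Ioo_phi_eq_zero : ∃ α ∈ Ioo 0 (1 / 3 : ℝ), phi α = 0 :=
  intermediate_value_Ioo (by norm_num) continuous_phi.continuousOn
    ⟨phi_zero_neg, phi_one_third_pos⟩

/-- The equation `−α·log₂(α) − (1−α)·log₂(1−α) = (1+2α)/2` has a unique solution in the
open interval `(0, 1/2)`. -/
theorem stmt15 :
    ∃! α : ℝ, 0 < α ∧ α < 1 / 2 ∧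
      -α * Real.logb 2 α - (1 - α) * Real.logb 2 (1 - α) = (1 + 2 * α) / 2 := by
  have equation_iff (α : ℝ) :
      -α * logb 2 α - (1 - α) * logb 2 (1 - α) = (1 + 2 * α) / 2 ↔ phi α = 0 := by
    rw [binEntropy_div_log_two, div_eq_iff (log_pos one_lt_two).ne', phi, sub_eq_zero, mul_comm]
  simp only [equation_iff]
  obtain ⟨α, ⟨hα₀, hα₁⟩, hα⟩ := exists_mem_Ioo_phi_eq_zero
  have mem_Icc {β : ℝ} (h₀ : 0 < β) (h₁ : β < 1 / 2) : β ∈ Icc (0 : ℝ) 1 :=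
    ⟨h₀.le, by linarith⟩
  refine ⟨α, ⟨hα₀, by linarith, hα⟩, fun β ⟨hβ₀, hβ₁, hβ⟩ => ?_⟩
  exact strictConcaveOn_phi.eq_of_map_eq_of_lt (c := 2⁻¹) (mem_Icc hβ₀ hβ₁)
    (mem_Icc hα₀ (by linarith)) (by norm_num) (by linarith) (by linarith)
    (hβ.trans phi_two_inv.symm) (hα.trans phi_two_inv.symm)
end
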